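/- For a compact metric space (X, ρ), the barycenter map ψ : (I²(X), ρ_2) → (I(X), ρ_1) is nonexpanding: ρ_1(ψ(M), ψ(N)) ≤ ρ_2(M, N) for all M, N ∈ I²(X). -/

import Mathlib

/-- An idempotent probability measure on `X`: a functional on `C(X, ℝ)` preserving constants,
shifting under addition of constants, and turning pointwise max into max. -/
def IsIPM (X : Type*) [TopologicalSpace X] (μ : C(X, ℝ) → ℝ) : Prop :=
  (∀ c : ℝ, μ (ContinuousMap.const X c) = c) ∧
  (∀ (φ : C(X, ℝ)) (c : ℝ), μ (φ + ContinuousMap.const X c) = μ φ + c) ∧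
  (∀ φ ψ : C(X, ℝ), μ (φ ⊔ ψ) = max (μ φ) (μ ψ))


/-- Pushforward of a functional along a continuous map: `I(f)(μ)(φ) = μ(φ ∘ f)`. -/
def IPMmap {X Y : Type*} [TopologicalSpace X] [TopologicalSpace Y]
    (f : C(X, Y)) (μ : C(X, ℝ) → ℝ) : C(Y, ℝ) → ℝ :=
  fun φ => μ (φ.comp f)


/-- The support of `μ`: intersection of all closed `A ⊆ X` such that `μ` comes from an
idempotent probability measure on `A`. -/
def IPMsupp {X : Type*} [TopologicalSpace X] (μ : C(X, ℝ) → ℝ) : Set X :=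
  ⋂₀ {A : Set X | IsClosed A ∧ ∃ ν : C(A, ℝ) → ℝ, IsIPM A ν ∧
      ∀ φ : C(X, ℝ), μ φ = ν (φ.restrict A)}

/-- The set `Λ(μ₁, μ₂)` of admissible measures on `X × X` with marginals `μ₁`, `μ₂`. -/
def AdmSet {X : Type*} [TopologicalSpace X] (μ₁ μ₂ : C(X, ℝ) → ℝ) :
    Set (C(X × X, ℝ) → ℝ) :=
  {ξ | IsIPM (X × X) ξ ∧ IPMmap ContinuousMap.fst ξ = μ₁ ∧ IPMmap ContinuousMap.snd ξ = μ₂}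

/-- `ρ_I(μ₁, μ₂) = inf { sup { d(x,y) : (x,y) ∈ supp ξ } : ξ ∈ Λ(μ₁, μ₂) }`,
with respect to a distance function `d` on `X`. -/
noncomputable def rhoID {X : Type*} [TopologicalSpace X] (d : X → X → ℝ)
    (μ₁ μ₂ : C(X, ℝ) → ℝ) : ℝ :=
  sInf ((fun ξ => sSup ((fun p : X × X => d p.1 p.2) '' IPMsupp ξ)) '' AdmSet μ₁ μ₂)

/-- The space `I(X)` of idempotent probability measures, with the pointwise-convergence
(subspace of product) topology. -/
abbrev IPMspace (X : Type*) [TopologicalSpace X] := {μ : C(X, ℝ) → ℝ // IsIPM X μ}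

/-- For `φ ∈ C(X, ℝ)`, the function `φ̄ : I(X) → ℝ`, `φ̄(μ) = μ(φ)`, is continuous. -/
def barFn {X : Type*} [TopologicalSpace X] (φ : C(X, ℝ)) : C(IPMspace X, ℝ) :=
  ⟨fun μ => μ.1 φ, (continuous_apply φ).comp continuous_subtype_val⟩

/-- The barycenter map `ψ_X : I²(X) → I(X)`, `ψ_X(M)(φ) = M(φ̄)`. -/
def bary {X : Type*} [TopologicalSpace X] (M : C(IPMspace X, ℝ) → ℝ) : C(X, ℝ) → ℝ :=
  fun φ => M (barFn φ)

/-!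
Fix `Ξ ∈ Λ(M, N)`, let `R` be the supremum of `ρ₁` over `supp Ξ`, and let `ε > 0`. An idempotent
measure `μ` on a compact Hausdorff space attains every value `μ Φ` at a point `z` of its support,
in the sense that `ψ z + (μ Φ - Φ z) ≤ μ ψ` for all `ψ`; hence on finitely many test functions `Ξ`
agrees with a finite max-plus combination `⊕ λᵢ ⊙ δ(μᵢ, νᵢ)` of Dirac measures at points of
`supp Ξ`. Replacing each `δ(μᵢ, νᵢ)` by a coupling of `μᵢ` and `νᵢ` concentrated on
`{d ≤ R + ε}` gives a coupling concentrated there whose marginals agree with `ψ M`, `ψ N` on those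
test functions. Idempotent measures concentrated on a fixed set form a compact set, so the finite
intersection property produces a coupling of `ψ M` and `ψ N` concentrated on `{d ≤ R + ε}`, and
concentration on a closed set bounds the support.
-/

open Set

namespace IsIPM

variable {W : Type*} [TopologicalSpace W] {μ : C(W, ℝ) → ℝ}

theorem map_const (h : IsIPM W μ) (c : ℝ) : μ (ContinuousMap.const W c) = c := h.1 c

theorem map_add_const (h : IsIPM W μ) (φ : C(W, ℝ)) (c : ℝ) :
    μ (φ + ContinuousMap.const W c) = μ φ + c :=
  h.2.1 φ c

theorem map_sup (h : IsIPM W μ) (φ ψ : C(W, ℝ)) : μ (φ ⊔ ψ) = max (μ φ) (μ ψ) := h.2.2 φ ψ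

theorem map_zero (h : IsIPM W μ) : μ 0 = 0 := h.map_const 0

theorem mono (h : IsIPM W μ) : Monotone μ := fun φ ψ hle => by
  have := h.map_sup φ ψ
  rw [sup_eq_right.2 hle] at this
  exact this ▸ le_max_left _ _

theorem le_add_of_le_add (h : IsIPM W μ) {φ ψ : C(W, ℝ)} {c : ℝ} (hle : ∀ z, φ z ≤ ψ z + c) :
    μ φ ≤ μ ψ + c :=
  h.map_add_const ψ c ▸ h.mono hle

theorem lipschitzWith [CompactSpace W] (h : IsIPM W μ) : LipschitzWith 1 μ :=
  LipschitzWith.of_le_add fun φ ψ => h.le_add_of_le_add fun z => by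
    have := ContinuousMap.dist_apply_le_dist (f := φ) (g := ψ) z
    rw [Real.dist_eq] at this
    linarith [le_abs_self (φ z - ψ z)]

theorem abs_le_norm [CompactSpace W] (h : IsIPM W μ) (φ : C(W, ℝ)) : |μ φ| ≤ ‖φ‖ := by
  simpa [h.map_zero, Real.dist_eq] using h.lipschitzWith.dist_le_mul φ 0

theorem nonempty (h : IsIPM W μ) : Nonempty W := by
  by_contra hW
  rw [not_nonempty_iff] at hW
  have := h.map_const 1
  rw [Subsingleton.elim (ContinuousMap.const W (1 : ℝ)) (ContinuousMap.const W 0),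
    h.map_const] at this
  norm_num at this

theorem map_finset_sup' (h : IsIPM W μ) {ι : Type*} {s : Finset ι} (hs : s.Nonempty)
    (f : ι → C(W, ℝ)) : μ (s.sup' hs f) = s.sup' hs (μ ∘ f) :=
  Finset.apply_sup'_eq_sup'_comp hs μ h.map_sup

theorem lt_of_forall_lt [CompactSpace W] (h : IsIPM W μ) {φ ψ : C(W, ℝ)}
    (hlt : ∀ z, φ z < ψ z) : μ φ < μ ψ := by
  have := h.nonempty
  obtain ⟨z₀, -, hz₀⟩ :=
    isCompact_univ.exists_isMinOn univ_nonempty (ψ - φ).continuous.continuousOn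
  have : μ φ + (ψ z₀ - φ z₀) ≤ μ ψ := by
    rw [← h.map_add_const]
    refine h.mono fun z => ?_
    have : ψ z₀ - φ z₀ ≤ ψ z - φ z := hz₀ (mem_univ z)
    show φ z + (ψ z₀ - φ z₀) ≤ ψ z
    linarith
  linarith [hlt z₀]

theorem exists_forall_add_le [CompactSpace W] (h : IsIPM W μ) (Φ : C(W, ℝ)) :
    ∃ z, ∀ ψ : C(W, ℝ), ψ z + (μ Φ - Φ z) ≤ μ ψ := by
  -- otherwise witnesses `ψ' z` with `μ (ψ' z) = μ Φ` and `Φ z < ψ' z z` cover `W`, and the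
  -- maximum of finitely many of them exceeds `Φ` everywhere without changing the value of `μ`
  by_contra! hcon
  choose ψ hψ using hcon
  set ψ' : W → C(W, ℝ) := fun z => ψ z + ContinuousMap.const W (μ Φ - μ (ψ z))
  have hμψ' : ∀ z, μ (ψ' z) = μ Φ := fun z => by simp only [ψ', h.map_add_const]; ring
  have hψ' : ∀ z, Φ z < ψ' z z := fun z => by
    simp only [ψ', ContinuousMap.add_apply, ContinuousMap.const_apply]
    linarith [hψ z]
  obtain ⟨t, ht⟩ := isCompact_univ.elim_finite_subcover (fun z => {w | Φ w < ψ' z w})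
    (fun z => isOpen_lt Φ.continuous (ψ' z).continuous) fun w _ => mem_iUnion.2 ⟨w, hψ' w⟩
  have ⟨w₀⟩ := h.nonempty
  have htne : t.Nonempty := by
    obtain ⟨z, hz, -⟩ := mem_iUnion₂.1 (ht (mem_univ w₀))
    exact ⟨z, hz⟩
  have hlt : μ Φ < μ (t.sup' htne ψ') := h.lt_of_forall_lt fun w => by
    obtain ⟨z, hz, hw⟩ := mem_iUnion₂.1 (ht (mem_univ w))
    rw [ContinuousMap.sup'_apply]
    exact lt_of_lt_of_le hw (Finset.le_sup' (fun z => ψ' z w) hz)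
  rw [h.map_finset_sup', Finset.sup'_eq_of_forall htne (μ ∘ ψ') fun z _ => hμψ' z] at hlt
  exact lt_irrefl _ hlt

end IsIPM

section Support

variable {W : Type*} [TopologicalSpace W] {μ : C(W, ℝ) → ℝ} {A B : Set W}

def IPMCarriers (μ : C(W, ℝ) → ℝ) : Set (Set W) :=
  {A | IsClosed A ∧ ∃ ν : C(A, ℝ) → ℝ, IsIPM A ν ∧ ∀ φ : C(W, ℝ), μ φ = ν (φ.restrict A)}

theorem IPMsupp_eq_sInter : IPMsupp μ = ⋂₀ IPMCarriers μ := rfl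

def IPMConcentratedOn (μ : C(W, ℝ) → ℝ) (A : Set W) : Prop :=
  ∀ φ ψ : C(W, ℝ), (∀ z ∈ A, φ z ≤ ψ z) → μ φ ≤ μ ψ

theorem IPMConcentratedOn.mono (hμA : IPMConcentratedOn μ A) (hAB : A ⊆ B) :
    IPMConcentratedOn μ B :=
  fun φ ψ hle => hμA φ ψ fun z hz => hle z (hAB hz)

theorem IPMConcentratedOn.eq_of_eqOn (hμA : IPMConcentratedOn μ A) {φ ψ : C(W, ℝ)}
    (h : EqOn φ ψ A) : μ φ = μ ψ :=
  le_antisymm (hμA φ ψ fun _ hz => (h hz).le) (hμA ψ φ fun _ hz => (h hz).ge)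

theorem IPMConcentratedOn.of_mem_carriers (hA : A ∈ IPMCarriers μ) : IPMConcentratedOn μ A := by
  obtain ⟨-, ν, hν, hrep⟩ := hA
  intro φ ψ hle
  rw [hrep φ, hrep ψ]
  exact hν.mono fun z => hle z z.2

theorem isClosed_setOf_IPMConcentratedOn (A : Set W) :
    IsClosed {μ : C(W, ℝ) → ℝ | IPMConcentratedOn μ A} := by
  simp only [IPMConcentratedOn, ofPred_forall]
  exact isClosed_iInter fun φ => isClosed_iInter fun ψ => isClosed_iInter fun _ =>
    isClosed_le (continuous_apply φ) (continuous_apply ψ)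

namespace IsIPM

theorem concentratedOn_univ (h : IsIPM W μ) : IPMConcentratedOn μ univ :=
  fun _ _ hle => h.mono fun z => hle z trivial

theorem concentratedOn_inter [NormalSpace W] (h : IsIPM W μ) (hA : IsClosed A) (hB : IsClosed B)
    (hμA : IPMConcentratedOn μ A) (hμB : IPMConcentratedOn μ B) : IPMConcentratedOn μ (A ∩ B) := by
  intro φ ψ hle
  refine le_of_forall_pos_le_add fun ε hε => ?_
  have hU : IsOpen {z | φ z < ψ z + ε} :=
    isOpen_lt φ.continuous (ψ.continuous.add continuous_const)
  obtain ⟨g, hgB, hgA, hg01⟩ := exists_continuous_zero_one_of_isClosed hB (hA.sdiff hU) <|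
    disjoint_left.2 fun z hzB hzA => hzA.2 ((hle z ⟨hzA.1, hzB⟩).trans_lt (lt_add_of_pos_right _ hε))
  -- `ψ + ε + g |φ - ψ|` dominates `φ` on `A` and equals `ψ + ε` on `B`
  calc μ φ ≤ μ (ψ + ContinuousMap.const W ε + g * |φ - ψ|) := hμA _ _ fun z hzA => ?_
    _ ≤ μ (ψ + ContinuousMap.const W ε) := hμB _ _ fun z hzB => by simp [hgB hzB]
    _ = μ ψ + ε := h.map_add_const ψ ε
  simp only [ContinuousMap.add_apply, ContinuousMap.const_apply, ContinuousMap.mul_apply,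
    ContinuousMap.abs_apply, ContinuousMap.sub_apply]
  by_cases hzU : φ z < ψ z + ε
  · linarith [mul_nonneg (hg01 z).1 (abs_nonneg (φ z - ψ z))]
  · rw [hgA ⟨hzA, hzU⟩, Pi.one_apply, one_mul]
    linarith [le_abs_self (φ z - ψ z)]

theorem concentratedOn_biInter [NormalSpace W] (h : IsIPM W μ) {ι : Type*} (s : Finset ι)
    {A : ι → Set W} (hA : ∀ i ∈ s, IsClosed (A i)) (hμA : ∀ i ∈ s, IPMConcentratedOn μ (A i)) :
    IPMConcentratedOn μ (⋂ i ∈ s, A i) := by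
  classical
  induction s using Finset.induction_on with
  | empty => simpa using h.concentratedOn_univ
  | insert i s _ ih =>
    rw [Finset.set_biInter_insert]
    have hA' : ∀ j ∈ s, IsClosed (A j) := fun j hj => hA j (Finset.mem_insert_of_mem hj)
    exact h.concentratedOn_inter (hA i (s.mem_insert_self i)) (isClosed_biInter hA')
      (hμA i (s.mem_insert_self i))
      (ih hA' fun j hj => hμA j (Finset.mem_insert_of_mem hj))

theorem concentratedOn_supp [CompactSpace W] [NormalSpace W] (h : IsIPM W μ) :
    IPMConcentratedOn μ (IPMsupp μ) := by
  intro φ ψ hle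
  refine le_of_forall_pos_le_add fun ε hε => ?_
  have hempty : {z | ψ z + ε ≤ φ z} ∩ ⋂ A : IPMCarriers μ, A.1 = ∅ := by
    refine eq_empty_iff_forall_notMem.2 fun z ⟨hz, hzsupp⟩ => ?_
    have hφψ : ψ z + ε ≤ φ z := hz
    linarith [hle z (by rwa [IPMsupp_eq_sInter, sInter_eq_iInter])]
  obtain ⟨u, hu⟩ := (isClosed_le (ψ.continuous.add continuous_const) φ.continuous).isCompact
    |>.elim_finite_subfamily_closed _ (fun A => A.2.1) hempty
  calc μ φ ≤ μ (ψ + ContinuousMap.const W ε) :=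
        h.concentratedOn_biInter u (fun A _ => A.2.1)
          (fun A _ => .of_mem_carriers A.2) _ _ fun z hz => by
          by_contra! hlt
          exact eq_empty_iff_forall_notMem.1 hu z ⟨hlt.le, hz⟩
    _ = μ ψ + ε := h.map_add_const ψ ε

theorem supp_subset_of_concentratedOn [NormalSpace W] (h : IsIPM W μ) (hA : IsClosed A)
    (hμA : IPMConcentratedOn μ A) : IPMsupp μ ⊆ A := by
  choose E hE using fun ψ : C(A, ℝ) => ψ.exists_restrict_eq hA
  have hEz : ∀ ψ z (hz : z ∈ A), E ψ z = ψ ⟨z, hz⟩ := fun ψ z hz =>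
    DFunLike.congr_fun (hE ψ) ⟨z, hz⟩
  refine sInter_subset_of_mem ⟨hA, fun ψ => μ (E ψ), ⟨fun c => ?_, fun ψ c => ?_, fun ψ ψ' => ?_⟩,
    fun φ => hμA.eq_of_eqOn fun z hz => (hEz (φ.restrict A) z hz).symm⟩
  all_goals dsimp only
  · exact (hμA.eq_of_eqOn (ψ := ContinuousMap.const W c) fun z hz => hEz _ z hz).trans
      (h.map_const c)
  · rw [← h.map_add_const]
    exact hμA.eq_of_eqOn fun z hz => by simp [hEz _ z hz]
  · rw [← h.map_sup]
    exact hμA.eq_of_eqOn fun z hz => by simp [hEz _ z hz]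

theorem supp_subset_iff [CompactSpace W] [NormalSpace W] (h : IsIPM W μ) (hA : IsClosed A) :
    IPMsupp μ ⊆ A ↔ IPMConcentratedOn μ A :=
  ⟨h.concentratedOn_supp.mono, h.supp_subset_of_concentratedOn hA⟩

theorem mem_supp_of_forall_add_le [NormalSpace W] [T1Space W] (h : IsIPM W μ) {z : W} {r : ℝ}
    (hz : ∀ ψ : C(W, ℝ), ψ z + r ≤ μ ψ) : z ∈ IPMsupp μ := by
  rw [IPMsupp_eq_sInter]
  refine fun A hA => by_contra fun hzA => ?_
  obtain ⟨g, hgA, hgz, -⟩ := exists_continuous_zero_one_of_isClosed hA.1 isClosed_singleton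
    (disjoint_singleton_right.2 hzA)
  have hμg : μ ((1 - r) • g) = 0 := by
    rw [(IPMConcentratedOn.of_mem_carriers hA).eq_of_eqOn (ψ := 0) fun w hw => by simp [hgA hw],
      h.map_zero]
  have := hz ((1 - r) • g)
  rw [hμg, ContinuousMap.smul_apply, hgz rfl, Pi.one_apply, smul_eq_mul, mul_one] at this
  linarith

end IsIPM

end Support

section Compactness

variable {W : Type*} [TopologicalSpace W]

theorem isClosed_setOf_isIPM : IsClosed {μ : C(W, ℝ) → ℝ | IsIPM W μ} := by
  simp only [IsIPM, ofPred_and, ofPred_forall]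
  refine .inter (isClosed_iInter fun c => isClosed_eq (continuous_apply _) continuous_const)
    (.inter (isClosed_iInter fun φ => isClosed_iInter fun c => ?_)
      (isClosed_iInter fun φ => isClosed_iInter fun ψ => ?_))
  · exact isClosed_eq (continuous_apply _) ((continuous_apply φ).add continuous_const)
  · exact isClosed_eq (continuous_apply _) ((continuous_apply φ).max (continuous_apply ψ))

theorem isCompact_setOf_isIPM [CompactSpace W] : IsCompact {μ : C(W, ℝ) → ℝ | IsIPM W μ} :=
  (isCompact_univ_pi fun φ : C(W, ℝ) => isCompact_Icc (a := -‖φ‖) (b := ‖φ‖)).of_isClosed_subset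
    isClosed_setOf_isIPM fun _ hμ => mem_univ_pi.2 fun φ => abs_le.1 (hμ.abs_le_norm φ)

instance [CompactSpace W] : CompactSpace (IPMspace W) :=
  isCompact_iff_compactSpace.mp isCompact_setOf_isIPM

end Compactness

theorem IsIPM.exists_finset_sup'_eq {W : Type*} [TopologicalSpace W] [CompactSpace W] [T2Space W]
    {μ : C(W, ℝ) → ℝ} (h : IsIPM W μ) (G : Finset C(W, ℝ)) :
    ∃ (P : Finset (IPMsupp μ × ℝ)) (hP : P.Nonempty),
      P.sup' hP Prod.snd = 0 ∧ ∀ Φ ∈ G, μ Φ = P.sup' hP fun p => Φ p.1 + p.2 := by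
  classical
  choose z hz using h.exists_forall_add_le
  set P := (insert 0 G).image fun Φ =>
    ((⟨z Φ, h.mem_supp_of_forall_add_le (hz Φ)⟩ : IPMsupp μ), μ Φ - Φ (z Φ))
  have hP : P.Nonempty := (Finset.insert_nonempty _ _).image _
  have hP_eq : ∀ Φ ∈ insert 0 G, μ Φ = P.sup' hP fun p => Φ p.1 + p.2 := fun Φ hΦ =>
    le_antisymm (Finset.le_sup'_of_le _ (Finset.mem_image_of_mem _ hΦ) (by simp))
      (Finset.sup'_le _ _ <| Finset.forall_mem_image.2 fun Ψ _ => hz Ψ Φ)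
  refine ⟨P, hP, ?_, fun Φ hΦ => hP_eq Φ (Finset.mem_insert_of_mem hΦ)⟩
  simpa [h.map_zero] using (hP_eq 0 (Finset.mem_insert_self _ _)).symm

theorem Finset.sup'_max {ι : Type*} {s : Finset ι} (hs : s.Nonempty) (f g : ι → ℝ) :
    s.sup' hs (fun i => max (f i) (g i)) = max (s.sup' hs f) (s.sup' hs g) :=
  le_antisymm (Finset.sup'_le _ _ fun _ hi => max_le_max (le_sup' f hi) (le_sup' g hi))
    (max_le (Finset.sup'_mono_fun fun _ _ => le_max_left _ _)
      (Finset.sup'_mono_fun fun _ _ => le_max_right _ _))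

section MaxPlus

variable {V ι : Type*} [TopologicalSpace V] {P : Finset ι} (hP : P.Nonempty) {w : ι → ℝ}
  {F : ι → C(V, ℝ) → ℝ}

/-- The idempotent convex combination `⊕ᵢ wᵢ ⊙ Fᵢ`. -/
def maxPlus (P : Finset ι) (hP : P.Nonempty) (w : ι → ℝ) (F : ι → C(V, ℝ) → ℝ) :
    C(V, ℝ) → ℝ :=
  fun φ => P.sup' hP fun i => F i φ + w i

theorem isIPM_maxPlus (hw : P.sup' hP w = 0) (hF : ∀ i ∈ P, IsIPM V (F i)) :
    IsIPM V (maxPlus P hP w F) := by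
  refine ⟨fun c => ?_, fun φ c => ?_, fun φ ψ => ?_⟩
  · rw [maxPlus, Finset.sup'_congr hP rfl fun i hi => by rw [(hF i hi).map_const, add_comm],
      ← Finset.sup'_add, hw, zero_add]
  · rw [maxPlus, maxPlus, Finset.sup'_add,
      Finset.sup'_congr hP rfl fun i hi => by rw [(hF i hi).map_add_const, add_right_comm]]
  · rw [maxPlus, maxPlus, maxPlus, ← Finset.sup'_max,
      Finset.sup'_congr hP rfl fun i hi => by rw [(hF i hi).map_sup, ← max_add_add_right]]

theorem concentratedOn_maxPlus {K : Set V} (hF : ∀ i ∈ P, IPMConcentratedOn (F i) K) :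
    IPMConcentratedOn (maxPlus P hP w F) K :=
  fun φ ψ hle => Finset.sup'_mono_fun fun i hi => add_le_add_left (hF i hi φ ψ hle) _

end MaxPlus

section Product

variable {X Y : Type*} [TopologicalSpace X] [TopologicalSpace Y] [CompactSpace Y]
  {μ : C(X, ℝ) → ℝ} {ν : C(Y, ℝ) → ℝ}

def prodIPM (μ : C(X, ℝ) → ℝ) (hν : IsIPM Y ν) : C(X × Y, ℝ) → ℝ :=
  fun φ => μ ((⟨ν, hν.lipschitzWith.continuous⟩ : C(C(Y, ℝ), ℝ)).comp φ.curry)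

theorem isIPM_prodIPM (hμ : IsIPM X μ) (hν : IsIPM Y ν) : IsIPM (X × Y) (prodIPM μ hν) := by
  refine ⟨fun c => (congrArg μ ?_).trans (hμ.map_const c),
    fun φ c => (congrArg μ ?_).trans (hμ.map_add_const _ c),
    fun φ ψ => (congrArg μ ?_).trans (hμ.map_sup _ _)⟩ <;> ext x
  · exact hν.map_const c
  · exact hν.map_add_const (φ.curry x) c
  · exact hν.map_sup (φ.curry x) (ψ.curry x)

theorem IPMmap_fst_prodIPM (hν : IsIPM Y ν) : IPMmap ContinuousMap.fst (prodIPM μ hν) = μ :=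
  funext fun φ => congrArg μ (ContinuousMap.ext fun x => hν.map_const (φ x))

theorem IPMmap_snd_prodIPM (hμ : IsIPM X μ) (hν : IsIPM Y ν) :
    IPMmap ContinuousMap.snd (prodIPM μ hν) = ν := by
  funext φ
  exact hμ.map_const (ν φ)

theorem admSet_nonempty {μ ν : C(Y, ℝ) → ℝ} (hμ : IsIPM Y μ) (hν : IsIPM Y ν) :
    (AdmSet μ ν).Nonempty :=
  ⟨prodIPM μ hν, isIPM_prodIPM hμ hν, IPMmap_fst_prodIPM hν, IPMmap_snd_prodIPM hμ hν⟩

end Product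

theorem exists_mem_admSet_bary_concentratedOn {X : Type*} [TopologicalSpace X] [CompactSpace X]
    {M N : C(IPMspace X, ℝ) → ℝ} {Ξ : C(IPMspace X × IPMspace X, ℝ) → ℝ}
    (hΞ : Ξ ∈ AdmSet M N) {K : Set (X × X)}
    (hK : ∀ p ∈ IPMsupp Ξ, ∃ ζ ∈ AdmSet p.1.1 p.2.1, IPMConcentratedOn ζ K) :
    ∃ ξ ∈ AdmSet (bary M) (bary N), IPMConcentratedOn ξ K := by
  classical
  choose ζ hζ hζK using fun p : IPMsupp Ξ => hK p.1 p.2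
  let T : C(X, ℝ) → Set (C(X × X, ℝ) → ℝ) := fun φ =>
    {ξ | ξ (φ.comp .fst) = bary M φ ∧ ξ (φ.comp .snd) = bary N φ}
  have hT : ∀ φ, IsClosed (T φ) := fun φ =>
    (isClosed_eq (continuous_apply _) continuous_const).inter
      (isClosed_eq (continuous_apply _) continuous_const)
  have hfin : ∀ G : Finset C(X, ℝ),
      ({ξ | IsIPM (X × X) ξ} ∩ {ξ | IPMConcentratedOn ξ K} ∩ ⋂ φ ∈ G, T φ).Nonempty := by
    intro G
    -- on the test functions `φ̄ ∘ pr`, `Ξ` is a max-plus combination of Dirac measures at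
    -- points `(μᵢ, νᵢ)` of its support; replace each of them by the coupling `ζ (μᵢ, νᵢ)`
    obtain ⟨P, hP, hw, hΞP⟩ := hΞ.1.exists_finset_sup'_eq
      (G.image (fun φ => (barFn φ).comp .fst) ∪ G.image (fun φ => (barFn φ).comp .snd))
    refine ⟨maxPlus P hP Prod.snd (fun p => ζ p.1),
      ⟨isIPM_maxPlus hP hw fun p _ => (hζ p.1).1, concentratedOn_maxPlus hP fun p _ => hζK p.1⟩,
      mem_iInter₂.2 fun φ hφ => ⟨?_, ?_⟩⟩
    · calc maxPlus P hP Prod.snd (fun p => ζ p.1) (φ.comp .fst)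
          = P.sup' hP (fun p => (barFn φ).comp .fst p.1.1 + p.2) :=
            Finset.sup'_congr hP rfl fun p _ => congrArg (· + p.2) (congrFun (hζ p.1).2.1 φ)
        _ = bary M φ := by
            rw [← hΞP _ (Finset.mem_union_left _ (Finset.mem_image_of_mem _ hφ)), ← hΞ.2.1]; rfl
    · calc maxPlus P hP Prod.snd (fun p => ζ p.1) (φ.comp .snd)
          = P.sup' hP (fun p => (barFn φ).comp .snd p.1.1 + p.2) :=
            Finset.sup'_congr hP rfl fun p _ => congrArg (· + p.2) (congrFun (hζ p.1).2.2 φ)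
        _ = bary N φ := by
            rw [← hΞP _ (Finset.mem_union_right _ (Finset.mem_image_of_mem _ hφ)), ← hΞ.2.2]; rfl
  obtain ⟨ξ, ⟨hξ, hξK⟩, hξT⟩ :=
    (isCompact_setOf_isIPM.inter_right (isClosed_setOf_IPMConcentratedOn K)).inter_iInter_nonempty
      T hT hfin
  exact ⟨ξ, ⟨hξ, funext fun φ => (mem_iInter.1 hξT φ).1, funext fun φ => (mem_iInter.1 hξT φ).2⟩,
    hξK⟩

theorem rhoID_nonneg {Y : Type*} [TopologicalSpace Y] {d : Y → Y → ℝ} (hd : ∀ x y, 0 ≤ d x y)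
    (μ ν : C(Y, ℝ) → ℝ) : 0 ≤ rhoID d μ ν :=
  Real.sInf_nonneg <| forall_mem_image.2 fun _ _ =>
    Real.sSup_nonneg <| forall_mem_image.2 fun p _ => hd p.1 p.2

theorem rhoID_le_sSup {Y : Type*} [TopologicalSpace Y] {d : Y → Y → ℝ} (hd : ∀ x y, 0 ≤ d x y)
    {μ ν : C(Y, ℝ) → ℝ} {ξ : C(Y × Y, ℝ) → ℝ} (hξ : ξ ∈ AdmSet μ ν) :
    rhoID d μ ν ≤ sSup ((fun p : Y × Y => d p.1 p.2) '' IPMsupp ξ) :=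
  csInf_le ⟨0, forall_mem_image.2 fun _ _ =>
    Real.sSup_nonneg <| forall_mem_image.2 fun p _ => hd p.1 p.2⟩ (mem_image_of_mem _ hξ)

section Metric

variable {X : Type*} [MetricSpace X] [CompactSpace X] {μ ν : C(X, ℝ) → ℝ}

theorem dist_le_diam_univ (x y : X) : dist x y ≤ Metric.diam (univ : Set X) :=
  Metric.dist_le_diam_of_mem isCompact_univ.isBounded trivial trivial

theorem rhoID_le_of_concentratedOn {ξ : C(X × X, ℝ) → ℝ} (hξ : ξ ∈ AdmSet μ ν) {c : ℝ}
    (hc : 0 ≤ c) (hξc : IPMConcentratedOn ξ {p | dist p.1 p.2 ≤ c}) :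
    rhoID (fun x y : X => dist x y) μ ν ≤ c :=
  (rhoID_le_sSup (fun _ _ => dist_nonneg) hξ).trans <| Real.sSup_le (forall_mem_image.2 fun _ hp =>
    (hξ.1.supp_subset_iff (isClosed_le continuous_dist continuous_const)).2 hξc hp) hc

theorem rhoID_le_diam (hμ : IsIPM X μ) (hν : IsIPM X ν) :
    rhoID (fun x y : X => dist x y) μ ν ≤ Metric.diam (univ : Set X) := by
  obtain ⟨ξ, hξ⟩ := admSet_nonempty hμ hν
  exact rhoID_le_of_concentratedOn hξ Metric.diam_nonneg fun φ ψ hle => hξ.1.mono fun p =>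
    hle p (dist_le_diam_univ p.1 p.2)

theorem exists_concentratedOn_of_rhoID_lt (hμ : IsIPM X μ) (hν : IsIPM X ν) {c : ℝ}
    (h : rhoID (fun x y : X => dist x y) μ ν < c) :
    ∃ ζ ∈ AdmSet μ ν, IPMConcentratedOn ζ {p : X × X | dist p.1 p.2 ≤ c} := by
  obtain ⟨_, ⟨ζ, hζ, rfl⟩, hζc⟩ := exists_lt_of_csInf_lt ((admSet_nonempty hμ hν).image _) h
  refine ⟨ζ, hζ, (hζ.1.supp_subset_iff (isClosed_le continuous_dist continuous_const)).1
    fun p hp => ?_⟩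
  have hbdd : BddAbove ((fun p : X × X => dist p.1 p.2) '' IPMsupp ζ) :=
    ⟨_, forall_mem_image.2 fun q _ => dist_le_diam_univ q.1 q.2⟩
  exact (le_csSup hbdd (mem_image_of_mem _ hp)).trans hζc.le

end Metric

/-- The barycenter map `ψ : (I²(X), ρ₂) → (I(X), ρ₁)` is nonexpanding. -/
theorem bary_nonexpanding {X : Type*} [MetricSpace X] [CompactSpace X]
    (M N : C(IPMspace X, ℝ) → ℝ) (hM : IsIPM (IPMspace X) M) (hN : IsIPM (IPMspace X) N) :
    rhoID (fun x y : X => dist x y) (bary M) (bary N) ≤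
      rhoID (fun μ ν : IPMspace X => rhoID (fun x y : X => dist x y) μ.1 ν.1) M N := by
  refine le_csInf ((admSet_nonempty hM hN).image _) ?_
  rintro _ ⟨Ξ, hΞ, rfl⟩
  set R := sSup ((fun p : IPMspace X × IPMspace X => rhoID (fun x y : X => dist x y) p.1.1 p.2.1)
    '' IPMsupp Ξ)
  have hR : ∀ p ∈ IPMsupp Ξ, rhoID (fun x y : X => dist x y) p.1.1 p.2.1 ≤ R := fun p hp =>
    le_csSup ⟨_, forall_mem_image.2 fun q _ => rhoID_le_diam q.1.2 q.2.2⟩ (mem_image_of_mem _ hp)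
  have hR₀ : 0 ≤ R :=
    Real.sSup_nonneg <| forall_mem_image.2 fun _ _ => rhoID_nonneg (fun _ _ => dist_nonneg) _ _
  refine le_of_forall_pos_le_add fun ε hε => ?_
  obtain ⟨ξ, hξ, hξK⟩ := exists_mem_admSet_bary_concentratedOn hΞ fun p hp =>
    exists_concentratedOn_of_rhoID_lt p.1.2 p.2.2 ((hR p hp).trans_lt (lt_add_of_pos_right R hε))
  exact rhoID_le_of_concentratedOn hξ (by positivity) hξK
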